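/- Let K be a set of integers ≥ 2, let l ≥ 2 be an integer, and let n, w, t be positive integers. Suppose there exist a (wt, w, K, 1)-CDF (equivalently, a strictly cyclic K-GDD of type w^t) and, for every k ∈ K, an l-MGDD of type k^n. Then there exists an l-SCHGDD of type (n, w^t). -/

import Mathlib

/-- A `k`-SCHGDD of type `(n, m^t)`: a finite family of `k`-element base blocks in
`Fin n × ZMod (m*t)` such that no block has two points in the same group (same first
coordinate), and for every ordered pair `i ≠ j` the difference list `Δ_{ij}` covers
`ZMod (m*t)` minus the subgroup generated by `t` exactly once, hitting no element of
that subgroup. -/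
def IsSCHGDD (k n m t : ℕ) (B : Finset (Finset (Fin n × ZMod (m * t)))) : Prop :=
  (∀ b ∈ B, b.card = k) ∧
  (∀ b ∈ B, ∀ p ∈ b, ∀ q ∈ b, p.1 = q.1 → p = q) ∧
  (∀ i j : Fin n, i ≠ j → ∀ z : ZMod (m * t),
    (z ∈ AddSubgroup.zmultiples ((t : ZMod (m * t))) →
      (∑ b ∈ B, ((b ×ˢ b).filter
        (fun pq => pq.1.1 = i ∧ pq.2.1 = j ∧ pq.1.2 - pq.2.2 = z)).card) = 0) ∧
    (z ∉ AddSubgroup.zmultiples ((t : ZMod (m * t))) →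
      (∑ b ∈ B, ((b ×ˢ b).filter
        (fun pq => pq.1.1 = i ∧ pq.2.1 = j ∧ pq.1.2 - pq.2.2 = z)).card) = 1))

/-- Existence of a `k`-SCHGDD of type `(n, m^t)`. -/
def ExistsSCHGDD (k n m t : ℕ) : Prop :=
  ∃ B : Finset (Finset (Fin n × ZMod (m * t))), IsSCHGDD k n m t B

/-- A `(g*t, g, K, 1)`-CDF: a finite family of base blocks in `ZMod (g*t)`, each of size
belonging to `K`, whose difference list covers `ZMod (g*t)` minus the subgroup generated
by `t` exactly once, hitting no element of that subgroup. -/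
def IsCDF (g t : ℕ) (K : Set ℕ) (F : Finset (Finset (ZMod (g * t)))) : Prop :=
  (∀ b ∈ F, b.card ∈ K) ∧
  (∀ z : ZMod (g * t),
    (z ∈ AddSubgroup.zmultiples ((t : ZMod (g * t))) →
      (∑ b ∈ F, ((b ×ˢ b).filter (fun pq => pq.1 ≠ pq.2 ∧ pq.1 - pq.2 = z)).card) = 0) ∧
    (z ∉ AddSubgroup.zmultiples ((t : ZMod (g * t))) →
      (∑ b ∈ F, ((b ×ˢ b).filter (fun pq => pq.1 ≠ pq.2 ∧ pq.1 - pq.2 = z)).card) = 1))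

/-- A `k`-MGDD of type `s^n`, realized on the point set `Fin n × Fin s` with the
`n` groups `{i} × Fin s` and the `s` holes `Fin n × {j}`: blocks have size `k`,
no block contains two points of a common group or of a common hole, and every pair of
points lying in neither a common group nor a common hole is in exactly one block. -/
def IsMGDD (k s n : ℕ) (B : Finset (Finset (Fin n × Fin s))) : Prop :=
  (∀ b ∈ B, b.card = k) ∧
  (∀ b ∈ B, ∀ p ∈ b, ∀ q ∈ b, p ≠ q → p.1 ≠ q.1 ∧ p.2 ≠ q.2) ∧
  (∀ p q : Fin n × Fin s, p.1 ≠ q.1 → p.2 ≠ q.2 →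
    (B.filter (fun b => p ∈ b ∧ q ∈ b)).card = 1)

/-!
Each base block `b` of the CDF, of size `k`, is replaced by the blocks of an `l`-MGDD of type
`k^n`, its points `Fin n × Fin k` being identified with `Fin n × b`. For groups `i ≠ j`, a pair
`(i, u), (j, v)` with `u ≠ v` lies in exactly one of these blocks, and none with `u = v`, so the
differences `Δ_ij` contributed by `b` are exactly the differences of `b`; summed over the base
blocks they form the difference list of the CDF. Two base blocks meet in at most one point
(a common pair would repeat a difference), so blocks lifted from different base blocks differ
and none is lost when the family is collected into a `Finset`.
-/

open Finset Function

theorem Finset.card_filter_image_product_image {α β : Type*} [DecidableEq β] {f : α → β}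
    (hf : Injective f) (s : Finset α) (P : β × β → Prop) [DecidablePred P] :
    #{pq ∈ s.image f ×ˢ s.image f | P pq} = #{pq ∈ s ×ˢ s | P (f pq.1, f pq.2)} := by
  rw [← prodMap_image_product, filter_image, card_image_of_injective _ (hf.prodMap hf)]
  rfl

namespace IsMGDD

variable {l s n : ℕ} {D : Finset (Finset (Fin n × Fin s))}

theorem card_filter_mem_mem (hD : IsMGDD l s n D) {p q : Fin n × Fin s} (hpq : p.1 ≠ q.1) :
    #{d ∈ D | p ∈ d ∧ q ∈ d} = if p.2 = q.2 then 0 else 1 := by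
  split_ifs with h
  · rw [card_eq_zero, filter_eq_empty_iff]
    rintro d hd ⟨hp, hq⟩
    exact (hD.2.1 d hd p hp q hq (fun e => hpq (e ▸ rfl))).2 h
  · exact hD.2.2 p q hpq h

theorem sum_card_filter_cross (hD : IsMGDD l s n D) {i j : Fin n} (hij : i ≠ j)
    (c : Fin s → Fin s → Prop) [DecidableRel c] :
    ∑ d ∈ D, #{pq ∈ d ×ˢ d | pq.1.1 = i ∧ pq.2.1 = j ∧ c pq.1.2 pq.2.2} =
      #{ac : Fin s × Fin s | ac.1 ≠ ac.2 ∧ c ac.1 ac.2} := by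
  set T : Finset ((Fin n × Fin s) × (Fin n × Fin s)) :=
    {pq | pq.1.1 = i ∧ pq.2.1 = j ∧ c pq.1.2 pq.2.2}
  set r : Finset (Fin n × Fin s) → (Fin n × Fin s) × (Fin n × Fin s) → Prop :=
    fun d pq => pq.1 ∈ d ∧ pq.2 ∈ d
  have hblock : ∀ d, #{pq ∈ d ×ˢ d | pq.1.1 = i ∧ pq.2.1 = j ∧ c pq.1.2 pq.2.2} =
      #(T.bipartiteAbove r d) := by
    intro d
    congr 1
    ext pq
    simp only [T, r, mem_filter, mem_product, mem_bipartiteAbove, mem_univ, true_and]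
    tauto
  calc ∑ d ∈ D, #{pq ∈ d ×ˢ d | pq.1.1 = i ∧ pq.2.1 = j ∧ c pq.1.2 pq.2.2}
      = ∑ pq ∈ T, #(D.bipartiteBelow r pq) := by
        simp_rw [hblock]
        exact sum_card_bipartiteAbove_eq_sum_card_bipartiteBelow r
    _ = ∑ pq ∈ T, if pq.1.2 = pq.2.2 then 0 else 1 := by
        refine sum_congr rfl fun pq hpq => hD.card_filter_mem_mem ?_
        obtain ⟨hi, hj, -⟩ := (mem_filter.1 hpq).2
        rwa [hi, hj]
    _ = #{pq ∈ T | pq.1.2 ≠ pq.2.2} := by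
        rw [card_filter]
        exact sum_congr rfl fun pq _ => by split_ifs <;> simp_all
    _ = #{ac : Fin s × Fin s | ac.1 ≠ ac.2 ∧ c ac.1 ac.2} := by
        refine card_nbij' (fun pq => (pq.1.2, pq.2.2)) (fun ac => ((i, ac.1), (j, ac.2)))
          ?_ ?_ ?_ ?_
        · rintro ⟨p, q⟩ hpq
          simp only [T, mem_coe, mem_filter, mem_univ, true_and] at hpq ⊢
          exact ⟨hpq.2, hpq.1.2.2⟩
        · rintro ⟨a, b⟩ hab
          simp only [T, mem_coe, mem_filter, mem_univ, true_and] at hab ⊢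
          exact hab.symm
        · rintro ⟨⟨p1, p2⟩, ⟨q1, q2⟩⟩ hpq
          simp only [T, mem_coe, mem_filter, mem_univ, true_and] at hpq
          obtain ⟨⟨rfl, rfl, -⟩, -⟩ := hpq
          rfl
        · intro ac _
          rfl

end IsMGDD

section Lift

variable {G : Type*} {l s n : ℕ}

noncomputable def enumBlock (b : Finset G) : Fin #b → G := fun a => b.equivFin.symm a

theorem enumBlock_injective (b : Finset G) : Injective (enumBlock b) :=
  Subtype.val_injective.comp b.equivFin.symm.injective

variable [DecidableEq G]

theorem image_enumBlock (b : Finset G) : univ.image (enumBlock b) = b := by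
  ext u
  simp only [enumBlock, mem_image, mem_univ, true_and]
  exact ⟨fun ⟨a, ha⟩ => ha ▸ (b.equivFin.symm a).2,
    fun hu => ⟨b.equivFin ⟨u, hu⟩, by simp⟩⟩

def liftBlock (x : Fin s → G) (d : Finset (Fin n × Fin s)) : Finset (Fin n × G) :=
  d.image (Prod.map id x)

theorem liftBlock_injective {x : Fin s → G} (hx : Injective x) :
    Injective (liftBlock (n := n) x) :=
  image_injective (injective_id.prodMap hx)

theorem card_liftBlock {x : Fin s → G} (hx : Injective x) (d : Finset (Fin n × Fin s)) :
    #(liftBlock x d) = #d :=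
  card_image_of_injective d (injective_id.prodMap hx)

theorem IsMGDD.exists_mem_liftBlock_snd_ne {D : Finset (Finset (Fin n × Fin s))}
    (hD : IsMGDD l s n D) (hl : 2 ≤ l) {x : Fin s → G} (hx : Injective x)
    {d : Finset (Fin n × Fin s)} (hd : d ∈ D) :
    ∃ P ∈ liftBlock x d, ∃ Q ∈ liftBlock x d, P.2 ≠ Q.2 := by
  obtain ⟨p, hp, q, hq, hpq⟩ := one_lt_card.1 (hl.trans_eq (hD.1 d hd).symm)
  exact ⟨_, mem_image_of_mem _ hp, _, mem_image_of_mem _ hq,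
    hx.ne (hD.2.1 d hd p hp q hq hpq).2⟩

theorem snd_mem_of_mem_liftBlock {b : Finset G} {d : Finset (Fin n × Fin #b)}
    {P : Fin n × G} (hP : P ∈ liftBlock (enumBlock b) d) : P.2 ∈ b := by
  obtain ⟨p, -, rfl⟩ := mem_image.1 hP
  have hp := mem_image_of_mem (enumBlock b) (mem_univ p.2)
  rwa [image_enumBlock] at hp

variable [AddGroup G]

def crossDiffCount (i j : Fin n) (z : G) (S : Finset (Fin n × G)) : ℕ :=
  #{pq ∈ S ×ˢ S | pq.1.1 = i ∧ pq.2.1 = j ∧ pq.1.2 - pq.2.2 = z}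

def diffCount (z : G) (b : Finset G) : ℕ :=
  #{pq ∈ b ×ˢ b | pq.1 ≠ pq.2 ∧ pq.1 - pq.2 = z}

theorem diffCount_sub_pos {b : Finset G} {u v : G} (hu : u ∈ b) (hv : v ∈ b) (huv : u ≠ v) :
    0 < diffCount (u - v) b :=
  card_pos.2 ⟨(u, v), mem_filter.2 ⟨mem_product.2 ⟨hu, hv⟩, huv, rfl⟩⟩

theorem IsMGDD.sum_crossDiffCount_liftBlock {D : Finset (Finset (Fin n × Fin s))}
    (hD : IsMGDD l s n D) {x : Fin s → G} (hx : Injective x) {i j : Fin n} (hij : i ≠ j)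
    (z : G) : ∑ d ∈ D, crossDiffCount i j z (liftBlock x d) = diffCount z (univ.image x) := by
  simp only [crossDiffCount, liftBlock, diffCount,
    card_filter_image_product_image (injective_id.prodMap hx),
    card_filter_image_product_image hx, Prod.map_fst, Prod.map_snd, id_eq, hx.ne_iff]
  rw [hD.sum_card_filter_cross hij (fun a b => x a - x b = z), univ_product_univ]

end Lift

section Family

variable {G : Type*} [DecidableEq G] {l n : ℕ} {F : Finset (Finset G)}
  {D : ∀ b : F, Finset (Finset (Fin n × Fin #b.1))}

noncomputable def liftFamily (F : Finset (Finset G))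
    (D : ∀ b : F, Finset (Finset (Fin n × Fin #b.1))) : Finset (Finset (Fin n × G)) :=
  F.attach.biUnion fun b => (D b).image (liftBlock (enumBlock b.1))

theorem mem_liftFamily {L : Finset (Fin n × G)} :
    L ∈ liftFamily F D ↔ ∃ b : F, ∃ d ∈ D b, liftBlock (enumBlock b.1) d = L := by
  simp [liftFamily]

theorem card_of_mem_liftFamily (hD : ∀ b, IsMGDD l #b.1 n (D b)) {L : Finset (Fin n × G)}
    (hL : L ∈ liftFamily F D) : #L = l := by
  obtain ⟨b, d, hd, rfl⟩ := mem_liftFamily.1 hL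
  rw [card_liftBlock (enumBlock_injective _), (hD b).1 d hd]

theorem eq_of_mem_liftFamily_of_fst_eq (hD : ∀ b, IsMGDD l #b.1 n (D b))
    {L : Finset (Fin n × G)} (hL : L ∈ liftFamily F D)
    {P Q : Fin n × G} (hP : P ∈ L) (hQ : Q ∈ L) (hPQ : P.1 = Q.1) : P = Q := by
  obtain ⟨b, d, hd, rfl⟩ := mem_liftFamily.1 hL
  obtain ⟨p, hp, rfl⟩ := mem_image.1 hP
  obtain ⟨q, hq, rfl⟩ := mem_image.1 hQ
  by_contra hne
  exact ((hD b).2.1 d hd p hp q hq (fun h => hne (h ▸ rfl))).1 hPQ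

theorem pairwiseDisjoint_liftFamily (hD : ∀ b, IsMGDD l #b.1 n (D b)) (hl : 2 ≤ l)
    (hF : (F : Set (Finset G)).Pairwise fun b b' => #(b ∩ b') ≤ 1) :
    (F.attach : Set F).PairwiseDisjoint fun b => (D b).image (liftBlock (enumBlock b.1)) := by
  intro b _ b' _ hbb'
  refine disjoint_left.2 fun L hL hL' => ?_
  obtain ⟨d, hd, rfl⟩ := mem_image.1 hL
  obtain ⟨d', -, hdd'⟩ := mem_image.1 hL'
  obtain ⟨P, hP, Q, hQ, hPQ⟩ := (hD b).exists_mem_liftBlock_snd_ne hl (enumBlock_injective _) hd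
  have hmem : ∀ R ∈ liftBlock (enumBlock b.1) d, R.2 ∈ b.1 ∩ b'.1 := fun R hR =>
    mem_inter.2 ⟨snd_mem_of_mem_liftBlock hR, snd_mem_of_mem_liftBlock (hdd' ▸ hR)⟩
  have : 1 < #(b.1 ∩ b'.1) := one_lt_card.2 ⟨_, hmem P hP, _, hmem Q hQ, hPQ⟩
  exact (hF b.2 b'.2 (Subtype.coe_injective.ne hbb')).not_gt this

theorem sum_crossDiffCount_liftFamily [AddGroup G] (hD : ∀ b, IsMGDD l #b.1 n (D b))
    (hl : 2 ≤ l) (hF : (F : Set (Finset G)).Pairwise fun b b' => #(b ∩ b') ≤ 1)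
    {i j : Fin n} (hij : i ≠ j) (z : G) :
    ∑ L ∈ liftFamily F D, crossDiffCount i j z L = ∑ b ∈ F, diffCount z b := by
  rw [liftFamily, sum_biUnion (pairwiseDisjoint_liftFamily hD hl hF), ← sum_attach F]
  refine sum_congr rfl fun b _ => ?_
  rw [sum_image fun d _ d' _ h => liftBlock_injective (enumBlock_injective _) h,
    (hD b).sum_crossDiffCount_liftBlock (enumBlock_injective _) hij, image_enumBlock]

end Family

namespace IsCDF

variable {g t : ℕ} {K : Set ℕ} {F : Finset (Finset (ZMod (g * t)))}

theorem sum_diffCount_le_one (hF : IsCDF g t K F) (z : ZMod (g * t)) :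
    ∑ b ∈ F, diffCount z b ≤ 1 := by
  by_cases hz : z ∈ AddSubgroup.zmultiples (t : ZMod (g * t))
  · exact ((hF.2 z).1 hz).trans_le zero_le_one
  · exact ((hF.2 z).2 hz).le

theorem pairwise_card_inter_le_one (hF : IsCDF g t K F) :
    (F : Set (Finset (ZMod (g * t)))).Pairwise fun b b' => #(b ∩ b') ≤ 1 := by
  intro b hb b' hb' hbb'
  by_contra! hcard
  obtain ⟨u, hu, v, hv, huv⟩ := one_lt_card.1 hcard
  rw [mem_inter] at hu hv
  have htwo : 2 ≤ ∑ c ∈ F, diffCount (u - v) c :=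
    calc 2 ≤ diffCount (u - v) b + diffCount (u - v) b' :=
          Nat.add_le_add (diffCount_sub_pos hu.1 hv.1 huv) (diffCount_sub_pos hu.2 hv.2 huv)
      _ = ∑ c ∈ {b, b'}, diffCount (u - v) c := (sum_pair hbb').symm
      _ ≤ ∑ c ∈ F, diffCount (u - v) c :=
          sum_le_sum_of_subset (insert_subset hb (singleton_subset_iff.2 hb'))
  have hone := hF.sum_diffCount_le_one (u - v)
  omega

theorem isSCHGDD_liftFamily {l n : ℕ} (hF : IsCDF g t K F) (hl : 2 ≤ l)
    {D : ∀ b : F, Finset (Finset (Fin n × Fin #b.1))} (hD : ∀ b, IsMGDD l #b.1 n (D b)) :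
    IsSCHGDD l n g t (liftFamily F D) := by
  refine ⟨fun L hL => card_of_mem_liftFamily hD hL,
    fun L hL P hP Q hQ => eq_of_mem_liftFamily_of_fst_eq hD hL hP hQ, fun i j hij z => ?_⟩
  have hsum := sum_crossDiffCount_liftFamily hD hl hF.pairwise_card_inter_le_one hij z
  exact ⟨fun hz => hsum.trans ((hF.2 z).1 hz), fun hz => hsum.trans ((hF.2 z).2 hz)⟩

end IsCDF

theorem schgdd_from_cdf_and_mgdd_general (K : Set ℕ) (l n w t : ℕ)
    (hl : 2 ≤ l)
    (h1 : ∃ F : Finset (Finset (ZMod (w * t))), IsCDF w t K F)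
    (h2 : ∀ k ∈ K, ∃ B : Finset (Finset (Fin n × Fin k)), IsMGDD l k n B) :
    ExistsSCHGDD l n w t := by
  obtain ⟨F, hF⟩ := h1
  choose D hD using fun b : F => h2 #b.1 (hF.1 b b.2)
  exact ⟨liftFamily F D, hF.isSCHGDD_liftFamily hl hD⟩

/-- Construction 3.3: if there exist a `(w*t, w, K, 1)`-CDF (i.e. a strictly cyclic
`K`-GDD of type `w^t`) and, for every `k ∈ K`, an `l`-MGDD of type `k^n`, then there
exists an `l`-SCHGDD of type `(n, w^t)`. -/
theorem schgdd_from_cdf_and_mgdd (K : Set ℕ) (l n w t : ℕ)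
    (hK : ∀ k ∈ K, 2 ≤ k) (hl : 2 ≤ l) (hn : 0 < n) (hw : 0 < w) (ht : 0 < t)
    (h1 : ∃ F : Finset (Finset (ZMod (w * t))), IsCDF w t K F)
    (h2 : ∀ k ∈ K, ∃ B : Finset (Finset (Fin n × Fin k)), IsMGDD l k n B) :
    ExistsSCHGDD l n w t :=
  schgdd_from_cdf_and_mgdd_general K l n w t hl h1 h2
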